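/- For the Type (A.2) metric with α = 1 and b ≠ 0, any positive solution φ of the conformally Einstein equation 2 Hes_φ + φρ = (1/4)(2Δφ + φτ)g depends only on (x₃,x₄), has the form φ(x₃,x₄) = ϕ(x₃)e^{x₄}, and ϕ satisfies the ODE 2qϕ'' = bϕ. -/

import Mathlib

open Real Matrix

noncomputable section

abbrev Pt : Type := Fin 4 → ℝ
abbrev Mtx : Type := Matrix (Fin 4) (Fin 4) ℝ

/-- Partial derivative in the `i`-th coordinate direction. -/
def pd (i : Fin 4) (f : Pt → ℝ) (x : Pt) : ℝ :=
  fderiv ℝ f x (Pi.single i 1)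

/-- Inverse of the metric matrix. -/
def ginv (g : Pt → Mtx) (x : Pt) : Mtx := (g x)⁻¹

/-- Christoffel symbols Γ^k_{ij} of the Levi-Civita connection. -/
def chris (g : Pt → Mtx) (x : Pt) (k i j : Fin 4) : ℝ :=
  (1/2) * ∑ l, ginv g x k l *
    (pd i (fun y => g y l j) x + pd j (fun y => g y l i) x - pd l (fun y => g y i j) x)

/-- Component `l` of the curvature operator R(∂_i,∂_j)∂_k (convention
R(X,Y) = ∇_{[X,Y]} - [∇_X,∇_Y]). -/
def Rup (g : Pt → Mtx) (x : Pt) (l i j k : Fin 4) : ℝ :=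
  pd j (fun y => chris g y l i k) x - pd i (fun y => chris g y l j k) x
    + ∑ m, chris g x m i k * chris g x l j m
    - ∑ m, chris g x m j k * chris g x l i m

/-- The (0,4) curvature tensor R(∂_i,∂_j,∂_k,∂_l) = g(R(∂_i,∂_j)∂_k, ∂_l). -/
def Riem (g : Pt → Mtx) (x : Pt) (i j k l : Fin 4) : ℝ :=
  ∑ m, g x l m * Rup g x m i j k

/-- Ricci tensor ρ(X,Y) = trace (Z ↦ R(X,Z)Y). -/
def ricci (g : Pt → Mtx) (x : Pt) (i j : Fin 4) : ℝ :=
  ∑ k, Rup g x k i k j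

/-- Scalar curvature. -/
def scal (g : Pt → Mtx) (x : Pt) : ℝ :=
  ∑ i, ∑ j, ginv g x i j * ricci g x i j

/-- The Ricci operator g^{-1}ρ. -/
def RicOp (g : Pt → Mtx) (x : Pt) : Mtx :=
  Matrix.of fun i j => ∑ k, ginv g x i k * ricci g x k j

/-- Schouten tensor 𝔖 = ρ - (τ/6) g (dimension 4). -/
def schouten (g : Pt → Mtx) (x : Pt) (i j : Fin 4) : ℝ :=
  ricci g x i j - scal g x / 6 * g x i j

/-- Covariant derivative of the Schouten tensor, (∇_i 𝔖)_{jk}. -/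
def covSchouten (g : Pt → Mtx) (x : Pt) (i j k : Fin 4) : ℝ :=
  pd i (fun y => schouten g y j k) x
    - ∑ m, chris g x m i j * schouten g x m k
    - ∑ m, chris g x m i k * schouten g x j m

/-- Cotton tensor 𝔠_{ijk} = (∇_i 𝔖)_{jk} - (∇_j 𝔖)_{ik}. -/
def cotton (g : Pt → Mtx) (x : Pt) (i j k : Fin 4) : ℝ :=
  covSchouten g x i j k - covSchouten g x j i k

/-- Weyl conformal curvature tensor (dimension 4). -/
def weyl (g : Pt → Mtx) (x : Pt) (i j k l : Fin 4) : ℝ :=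
  Riem g x i j k l
    - (1/2) * (g x i k * ricci g x j l - g x i l * ricci g x j k
        + g x j l * ricci g x i k - g x j k * ricci g x i l)
    + scal g x / 6 * (g x i k * g x j l - g x i l * g x j k)

/-- Covariant derivative of the Cotton tensor, (∇_α 𝔠)_{kij}. -/
def covCotton (g : Pt → Mtx) (x : Pt) (α k i j : Fin 4) : ℝ :=
  pd α (fun y => cotton g y k i j) x
    - ∑ m, chris g x m α k * cotton g x m i j
    - ∑ m, chris g x m α i * cotton g x k m j
    - ∑ m, chris g x m α j * cotton g x k i m

/-- Bach tensor B_{ij} = (1/2){ g^{kα}(∇_α 𝔠)_{kij} + ρ^{kℓ} W_{ikjℓ} }. -/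
def bach (g : Pt → Mtx) (x : Pt) (i j : Fin 4) : ℝ :=
  (1/2) * ((∑ k, ∑ α, ginv g x k α * covCotton g x α k i j)
    + ∑ k, ∑ l, (∑ p, ∑ r, ginv g x k p * ginv g x l r * ricci g x p r) * weyl g x i k j l)

/-- Hessian of a function with respect to the Levi-Civita connection. -/
def hess (g : Pt → Mtx) (φ : Pt → ℝ) (x : Pt) (i j : Fin 4) : ℝ :=
  pd i (fun y => pd j φ y) x - ∑ m, chris g x m i j * pd m φ x

/-- Laplacian (metric trace of the Hessian). -/
def lap (g : Pt → Mtx) (φ : Pt → ℝ) (x : Pt) : ℝ :=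
  ∑ i, ∑ j, ginv g x i j * hess g φ x i j

/-- The conformal metric ḡ = φ^{-2} g. -/
def conf (φ : Pt → ℝ) (g : Pt → Mtx) : Pt → Mtx :=
  fun y => ((φ y)^2)⁻¹ • g y

/-- Einstein at a point: ρ = (τ/4) g. -/
def IsEinsteinAt (g : Pt → Mtx) (x : Pt) : Prop :=
  ∀ i j, ricci g x i j = scal g x / 4 * g x i j

/-- The conformally Einstein equation 2 Hes_φ + φ ρ = (1/4)(2Δφ + φτ) g. -/
def ConfEinsteinEq (g : Pt → Mtx) (φ : Pt → ℝ) : Prop :=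
  ∀ (x : Pt) (i j : Fin 4),
    2 * hess g φ x i j + φ x * ricci g x i j
      = (1/4) * (2 * lap g φ x + φ x * scal g x) * g x i j

/-- Jacobi operator J(v) = R(·,v)v as a matrix. -/
def jacobi (g : Pt → Mtx) (x : Pt) (v : Fin 4 → ℝ) : Mtx :=
  Matrix.of fun l i => ∑ j, ∑ k, v j * v k * Rup g x l i j k

/-- Type (A.1) metric. Coordinates: `x 0 = x₁, …, x 3 = x₄`. -/
def gA1 (a b c q : ℝ) : Pt → Mtx := fun x =>
  !![4*b*(x 1)^2 + a, 2*b*(x 1), -(4*a*(x 1)*(x 3) - 4*c*(x 1) + a)/2, 2*a*(x 1);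
     2*b*(x 1), b, -(a*(x 3) - c), a;
     -(4*a*(x 1)*(x 3) - 4*c*(x 1) + a)/2, -(a*(x 3) - c), q, 0;
     2*a*(x 1), a, 0, 0]

/-- Type (A.2) metric. -/
def gA2 (a b c q α : ℝ) : Pt → Mtx := fun x =>
  !![0, 0, -a * Real.exp (2*α*(x 3)), 0;
     0, a * Real.exp (2*α*(x 3)), 0, 0;
     -a * Real.exp (2*α*(x 3)), 0, b * Real.exp (2*(α-1)*(x 3)), c * Real.exp ((α-1)*(x 3));
     0, 0, c * Real.exp ((α-1)*(x 3)), q]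

/-- Type (A.3) metric `g₊`. -/
def gA3p (a b c q : ℝ) : Pt → Mtx := fun x =>
  !![0, 0, 0, a * Real.exp (2*(x 2));
     0, a * Real.exp (2*(x 2)) * Real.cos (x 3)^2, 0, 0;
     0, 0, b, c;
     a * Real.exp (2*(x 2)), 0, c, q]

/-- Type (A.3) metric `g₋`. -/
def gA3m (a b c q : ℝ) : Pt → Mtx := fun x =>
  !![0, 0, 0, a * Real.exp (2*(x 2));
     0, a * Real.exp (2*(x 2)) * Real.cosh (x 3)^2, 0, 0;
     0, 0, b, c;
     a * Real.exp (2*(x 2)), 0, c, q]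

/-- Type (A.4) metric. -/
def gA4 (a b : ℝ) : Pt → Mtx := fun x =>
  !![a/2*(x 3)^2 + 4*b*(x 1)^2 + a, 2*b*(x 1), a*(x 1)*(4 + (x 3)^2)/2, a*(1 + 2*(x 1)*(x 2))*(x 3)/2;
     2*b*(x 1), b, a*(4 + (x 3)^2)/4, a*(x 2)*(x 3)/2;
     a*(x 1)*(4 + (x 3)^2)/2, a*(4 + (x 3)^2)/4, 0, 0;
     a*(1 + 2*(x 1)*(x 2))*(x 3)/2, a*(x 2)*(x 3)/2, 0, a/2]

/-- Type (A.5) metric. -/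
def gA5 (a : ℝ) : Pt → Mtx := fun x =>
  !![0, -a*(x 3)/(8*(x 1)), 0, a/8;
     -a*(x 3)/(8*(x 1)), a*(2 + 2*(x 0)*(x 3) + (x 2)^2)/(8*(x 1)^2), -a*(x 2)/(8*(x 1)), -a*(x 0)/(8*(x 1));
     0, -a*(x 2)/(8*(x 1)), a/8, 0;
     a/8, -a*(x 0)/(8*(x 1)), 0, 0]

/-- Type (B.1) metric. -/
def gB1 (a b c q : ℝ) : Pt → Mtx := fun x =>
  !![q*((x 2)^2 + 4*(x 1)*(x 2)*(x 3) + 4*(x 1)^2*(x 3)^2) + 4*c*(x 1)*(x 2) + 8*c*(x 1)^2*(x 3) + 2*a*(x 2) + 4*b*(x 1)^2,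
       q*((x 2)*(x 3) + 2*(x 1)*(x 3)^2) + 4*c*(x 1)*(x 3) + c*(x 2) + 2*b*(x 1),
       q*((x 2) + 2*(x 1)*(x 3)) + 2*c*(x 1) + a, 2*a*(x 1);
     q*((x 2)*(x 3) + 2*(x 1)*(x 3)^2) + 4*c*(x 1)*(x 3) + c*(x 2) + 2*b*(x 1),
       q*(x 3)^2 + 2*c*(x 3) + b, q*(x 3) + c, a;
     q*((x 2) + 2*(x 1)*(x 3)) + 2*c*(x 1) + a, q*(x 3) + c, q, 0;
     2*a*(x 1), a, 0, 0]

/-- Type (B.3) metric. -/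
def gB3 (a b : ℝ) : Pt → Mtx := fun x =>
  !![0, -a * Real.exp (-(x 1)) * (x 2), a * Real.exp (-(x 1)), 0;
     -a * Real.exp (-(x 1)) * (x 2), 2*(2*b*(x 2)^2 - a*(x 3)), -2*b*(x 2), a;
     a * Real.exp (-(x 1)), -2*b*(x 2), b, 0;
     0, a, 0, 0]

section tools
variable {f g : Pt → ℝ} {x : Pt} {i j : Fin 4} {c : ℝ}

lemma contDiff_pd (hf : ContDiff ℝ (⊤ : ℕ∞) f) (i : Fin 4) : ContDiff ℝ (⊤ : ℕ∞) (pd i f) := by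
  have h1 : ContDiff ℝ (⊤ : ℕ∞) (fderiv ℝ f) := hf.fderiv_right (by simp)
  exact h1.clm_apply contDiff_const

lemma diffable (hf : ContDiff ℝ (⊤ : ℕ∞) f) : DifferentiableAt ℝ f x :=
  (hf.differentiable (by simp)) x

lemma pd_comm (hf : ContDiff ℝ (⊤ : ℕ∞) f) (i j : Fin 4) (x : Pt) :
    pd i (pd j f) x = pd j (pd i f) x := by
  have hd : DifferentiableAt ℝ (fderiv ℝ f) x :=
    ((hf.fderiv_right (m := (⊤ : ℕ∞)) (by simp)).differentiable (by simp)) x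
  have h1 : ∀ (k l : Fin 4), pd k (pd l f) x
      = fderiv ℝ (fderiv ℝ f) x (Pi.single k 1) (Pi.single l 1) := by
    intro k l
    have : pd l f = fun y => fderiv ℝ f y (Pi.single l 1) := rfl
    rw [pd, this, fderiv_clm_apply hd (differentiableAt_const _)]
    simp
  rw [h1, h1]
  exact (hf.contDiffAt.isSymmSndFDerivAt (by rw [minSmoothness_of_isRCLikeNormedField]; exact WithTop.coe_le_coe.mpr (le_top : (2 : ℕ∞) ≤ ⊤))) _ _

lemma pd_const (i : Fin 4) (c : ℝ) (x : Pt) : pd i (fun _ => c) x = 0 := by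
  simp [pd]

lemma pd_add (hf : DifferentiableAt ℝ f x) (hg : DifferentiableAt ℝ g x) :
    pd i (fun y => f y + g y) x = pd i f x + pd i g x := by
  simp [pd, fderiv_fun_add hf hg]

lemma pd_cmul (hf : DifferentiableAt ℝ f x) :
    pd i (fun y => c * f y) x = c * pd i f x := by
  simp [pd, fderiv_const_mul hf c]

lemma pd_mul (hf : DifferentiableAt ℝ f x) (hg : DifferentiableAt ℝ g x) :
    pd i (fun y => f y * g y) x = f x * pd i g x + pd i f x * g x := by
  simp [pd, fderiv_fun_mul hf hg]; ring

lemma pd_coord (i j : Fin 4) (x : Pt) :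
    pd i (fun y : Pt => y j) x = if i = j then 1 else 0 := by
  have : (fun y : Pt => y j) = (ContinuousLinearMap.proj (R := ℝ) (φ := fun _ : Fin 4 => ℝ) j) := rfl
  rw [pd, this, ContinuousLinearMap.fderiv]
  rw [ContinuousLinearMap.proj_apply, Pi.single_apply]
  simp [eq_comm]

lemma pd_cexp (i : Fin 4) (k C : ℝ) (x : Pt) :
    pd i (fun y : Pt => C * Real.exp (k * y 3)) x
      = if i = 3 then C * k * Real.exp (k * x 3) else 0 := by
  have h3 : DifferentiableAt ℝ (fun y : Pt => y 3) x :=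
    (ContinuousLinearMap.proj (R := ℝ) (φ := fun _ : Fin 4 => ℝ) 3).differentiableAt
  have h2 : DifferentiableAt ℝ (fun y : Pt => k * y 3) x := h3.const_mul k
  have h1 : DifferentiableAt ℝ (fun y : Pt => Real.exp (k * y 3)) x := h2.exp
  rw [pd_cmul h1]
  have : pd i (fun y : Pt => Real.exp (k * y 3)) x
      = Real.exp (k * x 3) * pd i (fun y : Pt => k * y 3) x := by
    rw [pd, pd, fderiv_exp h2]; simp
  rw [this, pd_cmul h3, pd_coord]
  split_ifs <;> ring

end tools

section metric
variable {a b c q : ℝ}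

/-- abbreviation for the conformal factor of the metric -/
def Ex (x : Pt) : ℝ := Real.exp (2 * x 3)

lemma Ex_pos (x : Pt) : 0 < Ex x := Real.exp_pos _
lemma Ex_ne (x : Pt) : Ex x ≠ 0 := (Ex_pos x).ne'

lemma gval (x : Pt) : gA2 a b c q 1 x =
    !![0, 0, -(a * Ex x), 0;
       0, a * Ex x, 0, 0;
       -(a * Ex x), 0, b, c;
       0, 0, c, q] := by
  unfold gA2 Ex
  norm_num

lemma ginv_val (ha : a ≠ 0) (hq : q ≠ 0) (x : Pt) : ginv (gA2 a b c q 1) x =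
    !![(c^2 - b*q)/(q*(a * Ex x)^2), 0, -(1/(a * Ex x)), c/(q*(a*Ex x));
       0, 1/(a*Ex x), 0, 0;
       -(1/(a*Ex x)), 0, 0, 0;
       c/(q*(a*Ex x)), 0, 0, 1/q] := by
  have hE := Ex_ne x
  rw [ginv, Matrix.inv_eq_right_inv]
  rw [gval]
  ext i j
  fin_cases i <;> fin_cases j <;>
    simp [Matrix.mul_apply, Fin.sum_univ_four, Matrix.one_apply, Matrix.vecHead, Matrix.vecTail] <;>
    field_simp <;> ring
end metric

section chrisSec
variable {a b c q : ℝ}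

/-- x₃-derivative of the metric matrix -/
def DG (a : ℝ) (x : Pt) : Mtx :=
  !![0, 0, -(2*(a * Ex x)), 0;
     0, 2*(a * Ex x), 0, 0;
     -(2*(a * Ex x)), 0, 0, 0;
     0, 0, 0, 0]

lemma pd_g (m i j : Fin 4) (x : Pt) :
    pd m (fun y => gA2 a b c q 1 y i j) x = if m = 3 then DG a x i j else 0 := by
  have key : ∀ (C k : ℝ), (∀ y : Pt, gA2 a b c q 1 y i j = C * Real.exp (k * y 3)) →
      pd m (fun y => gA2 a b c q 1 y i j) x
        = if m = 3 then C * k * Real.exp (k * x 3) else 0 := by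
    intro C k hk
    rw [show (fun y => gA2 a b c q 1 y i j) = (fun y : Pt => C * Real.exp (k * y 3)) from
      funext hk, pd_cexp]
  fin_cases i <;> fin_cases j
  · rw [key 0 0 (by intro y; rw [gval]; simp [Matrix.vecHead, Matrix.vecTail])]; simp [DG, Matrix.vecHead, Matrix.vecTail]
  · rw [key 0 0 (by intro y; rw [gval]; simp [Matrix.vecHead, Matrix.vecTail])]; simp [DG, Matrix.vecHead, Matrix.vecTail]
  · rw [key (-a) 2 (by intro y; rw [gval]; simp [Ex]; try ring)]
    simp [DG, Ex, Matrix.vecHead, Matrix.vecTail]; split_ifs <;> ring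
  · rw [key 0 0 (by intro y; rw [gval]; simp [Matrix.vecHead, Matrix.vecTail])]; simp [DG, Matrix.vecHead, Matrix.vecTail]
  · rw [key 0 0 (by intro y; rw [gval]; simp [Matrix.vecHead, Matrix.vecTail])]; simp [DG, Matrix.vecHead, Matrix.vecTail]
  · rw [key a 2 (by intro y; rw [gval]; simp [Ex]; try ring)]
    simp [DG, Ex, Matrix.vecHead, Matrix.vecTail]; split_ifs <;> ring
  · rw [key 0 0 (by intro y; rw [gval]; simp [Matrix.vecHead, Matrix.vecTail])]; simp [DG, Matrix.vecHead, Matrix.vecTail]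
  · rw [key 0 0 (by intro y; rw [gval]; simp [Matrix.vecHead, Matrix.vecTail])]; simp [DG, Matrix.vecHead, Matrix.vecTail]
  · rw [key (-a) 2 (by intro y; rw [gval]; simp [Ex]; try ring)]
    simp [DG, Ex, Matrix.vecHead, Matrix.vecTail]; split_ifs <;> ring
  · rw [key 0 0 (by intro y; rw [gval]; simp [Matrix.vecHead, Matrix.vecTail])]; simp [DG, Matrix.vecHead, Matrix.vecTail]
  · rw [key b 0 (by intro y; rw [gval]; simp [Matrix.vecHead, Matrix.vecTail])]; simp [DG, Matrix.vecHead, Matrix.vecTail]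
  · rw [key c 0 (by intro y; rw [gval]; simp [Matrix.vecHead, Matrix.vecTail])]; simp [DG, Matrix.vecHead, Matrix.vecTail]
  · rw [key 0 0 (by intro y; rw [gval]; simp [Matrix.vecHead, Matrix.vecTail])]; simp [DG, Matrix.vecHead, Matrix.vecTail]
  · rw [key 0 0 (by intro y; rw [gval]; simp [Matrix.vecHead, Matrix.vecTail])]; simp [DG, Matrix.vecHead, Matrix.vecTail]
  · rw [key c 0 (by intro y; rw [gval]; simp [Matrix.vecHead, Matrix.vecTail])]; simp [DG, Matrix.vecHead, Matrix.vecTail]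
  · rw [key q 0 (by intro y; rw [gval]; simp [Matrix.vecHead, Matrix.vecTail])]; simp [DG, Matrix.vecHead, Matrix.vecTail]

/-- explicit Christoffel symbols -/
def Γm (a b c q : ℝ) (x : Pt) : Fin 4 → Mtx :=
  ![!![0, 0, c/q, 1;
      0, -(c/q), 0, 0;
      c/q, 0, 0, (b*q - c^2)/(q*(a * Ex x));
      1, 0, (b*q - c^2)/(q*(a * Ex x)), 0],
    !![0, 0, 0, 0;
      0, 0, 0, 1;
      0, 0, 0, 0;
      0, 1, 0, 0],
    !![0, 0, 0, 0;
      0, 0, 0, 0;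
      0, 0, 0, 1;
      0, 0, 1, 0],
    !![0, 0, a * Ex x/q, 0;
      0, -(a * Ex x/q), 0, 0;
      a * Ex x/q, 0, 0, -(c/q);
      0, 0, -(c/q), 0]]

set_option maxHeartbeats 2000000 in
lemma chris_fun (ha : a ≠ 0) (hq : q ≠ 0) :
    chris (gA2 a b c q 1) = fun x k i j => Γm a b c q x k i j := by
  funext x k i j
  have hE := Ex_ne x
  fin_cases k <;> fin_cases i <;> fin_cases j <;>
    (simp [chris, Fin.sum_univ_four, ginv_val ha hq, pd_g, Γm, DG,
        Matrix.vecHead, Matrix.vecTail] <;>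
     field_simp <;> ring)
end chrisSec

section dchris
variable {a b c q : ℝ}

/-- x₃-derivative of the Christoffel symbols -/
def DΓ (a b c q : ℝ) (x : Pt) : Fin 4 → Mtx :=
  ![!![0, 0, 0, 0;
      0, 0, 0, 0;
      0, 0, 0, -(2*((b*q - c^2)/(q*(a * Ex x))));
      0, 0, -(2*((b*q - c^2)/(q*(a * Ex x)))), 0],
    0, 0,
    !![0, 0, 2*(a * Ex x/q), 0;
      0, -(2*(a * Ex x/q)), 0, 0;
      2*(a * Ex x/q), 0, 0, 0;
      0, 0, 0, 0]]

set_option maxHeartbeats 1000000 in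
lemma pd_Γ (ha : a ≠ 0) (hq : q ≠ 0) (m k i j : Fin 4) (x : Pt) :
    pd m (fun y => Γm a b c q y k i j) x = if m = 3 then DΓ a b c q x k i j else 0 := by
  have key : ∀ (C κ : ℝ), (∀ y : Pt, Γm a b c q y k i j = C * Real.exp (κ * y 3)) →
      pd m (fun y => Γm a b c q y k i j) x
        = if m = 3 then C * κ * Real.exp (κ * x 3) else 0 := by
    intro C κ hk
    rw [show (fun y => Γm a b c q y k i j) = (fun y : Pt => C * Real.exp (κ * y 3)) from
      funext hk, pd_cexp]
  fin_cases k <;> fin_cases i <;> fin_cases j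
  · rw [key (0) 0 (by intro y; norm_num [Γm, Matrix.vecHead, Matrix.vecTail])]
    norm_num [DΓ, Matrix.vecHead, Matrix.vecTail]
  · rw [key (0) 0 (by intro y; norm_num [Γm, Matrix.vecHead, Matrix.vecTail])]
    norm_num [DΓ, Matrix.vecHead, Matrix.vecTail]
  · rw [key (c/q) 0 (by intro y; norm_num [Γm, Matrix.vecHead, Matrix.vecTail])]
    norm_num [DΓ, Matrix.vecHead, Matrix.vecTail]
  · rw [key (1) 0 (by intro y; norm_num [Γm, Matrix.vecHead, Matrix.vecTail])]
    norm_num [DΓ, Matrix.vecHead, Matrix.vecTail]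
  · rw [key (0) 0 (by intro y; norm_num [Γm, Matrix.vecHead, Matrix.vecTail])]
    norm_num [DΓ, Matrix.vecHead, Matrix.vecTail]
  · rw [key (-(c/q)) 0 (by intro y; norm_num [Γm, Matrix.vecHead, Matrix.vecTail])]
    norm_num [DΓ, Matrix.vecHead, Matrix.vecTail]
  · rw [key (0) 0 (by intro y; norm_num [Γm, Matrix.vecHead, Matrix.vecTail])]
    norm_num [DΓ, Matrix.vecHead, Matrix.vecTail]
  · rw [key (0) 0 (by intro y; norm_num [Γm, Matrix.vecHead, Matrix.vecTail])]
    norm_num [DΓ, Matrix.vecHead, Matrix.vecTail]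
  · rw [key (c/q) 0 (by intro y; norm_num [Γm, Matrix.vecHead, Matrix.vecTail])]
    norm_num [DΓ, Matrix.vecHead, Matrix.vecTail]
  · rw [key (0) 0 (by intro y; norm_num [Γm, Matrix.vecHead, Matrix.vecTail])]
    norm_num [DΓ, Matrix.vecHead, Matrix.vecTail]
  · rw [key (0) 0 (by intro y; norm_num [Γm, Matrix.vecHead, Matrix.vecTail])]
    norm_num [DΓ, Matrix.vecHead, Matrix.vecTail]
  · rw [key ((b*q - c^2)/(q*a)) (-2) (by
        intro y
        rw [show (-2:ℝ) * (y 3) = -(2 * (y 3)) by ring, Real.exp_neg]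
        simp [Γm, Ex, Matrix.vecHead, Matrix.vecTail]
        field_simp
        try exact Or.inl (by ring)
        try ring)]
    rw [show (-2:ℝ) * (x 3) = -(2 * (x 3)) by ring, Real.exp_neg]
    simp [DΓ, Ex, Matrix.vecHead, Matrix.vecTail]
    split_ifs
    · field_simp; try exact Or.inl (by ring)
      try ring
    · rfl
  · rw [key (1) 0 (by intro y; norm_num [Γm, Matrix.vecHead, Matrix.vecTail])]
    norm_num [DΓ, Matrix.vecHead, Matrix.vecTail]
  · rw [key (0) 0 (by intro y; norm_num [Γm, Matrix.vecHead, Matrix.vecTail])]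
    norm_num [DΓ, Matrix.vecHead, Matrix.vecTail]
  · rw [key ((b*q - c^2)/(q*a)) (-2) (by
        intro y
        rw [show (-2:ℝ) * (y 3) = -(2 * (y 3)) by ring, Real.exp_neg]
        simp [Γm, Ex, Matrix.vecHead, Matrix.vecTail]
        field_simp
        try exact Or.inl (by ring)
        try ring)]
    rw [show (-2:ℝ) * (x 3) = -(2 * (x 3)) by ring, Real.exp_neg]
    simp [DΓ, Ex, Matrix.vecHead, Matrix.vecTail]
    split_ifs
    · field_simp; try exact Or.inl (by ring)
      try ring
    · rfl
  · rw [key (0) 0 (by intro y; norm_num [Γm, Matrix.vecHead, Matrix.vecTail])]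
    norm_num [DΓ, Matrix.vecHead, Matrix.vecTail]
  · rw [key (0) 0 (by intro y; norm_num [Γm, Matrix.vecHead, Matrix.vecTail])]
    norm_num [DΓ, Matrix.vecHead, Matrix.vecTail]
  · rw [key (0) 0 (by intro y; norm_num [Γm, Matrix.vecHead, Matrix.vecTail])]
    norm_num [DΓ, Matrix.vecHead, Matrix.vecTail]
  · rw [key (0) 0 (by intro y; norm_num [Γm, Matrix.vecHead, Matrix.vecTail])]
    norm_num [DΓ, Matrix.vecHead, Matrix.vecTail]
  · rw [key (0) 0 (by intro y; norm_num [Γm, Matrix.vecHead, Matrix.vecTail])]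
    norm_num [DΓ, Matrix.vecHead, Matrix.vecTail]
  · rw [key (0) 0 (by intro y; norm_num [Γm, Matrix.vecHead, Matrix.vecTail])]
    norm_num [DΓ, Matrix.vecHead, Matrix.vecTail]
  · rw [key (0) 0 (by intro y; norm_num [Γm, Matrix.vecHead, Matrix.vecTail])]
    norm_num [DΓ, Matrix.vecHead, Matrix.vecTail]
  · rw [key (0) 0 (by intro y; norm_num [Γm, Matrix.vecHead, Matrix.vecTail])]
    norm_num [DΓ, Matrix.vecHead, Matrix.vecTail]
  · rw [key (1) 0 (by intro y; norm_num [Γm, Matrix.vecHead, Matrix.vecTail])]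
    norm_num [DΓ, Matrix.vecHead, Matrix.vecTail]
  · rw [key (0) 0 (by intro y; norm_num [Γm, Matrix.vecHead, Matrix.vecTail])]
    norm_num [DΓ, Matrix.vecHead, Matrix.vecTail]
  · rw [key (0) 0 (by intro y; norm_num [Γm, Matrix.vecHead, Matrix.vecTail])]
    norm_num [DΓ, Matrix.vecHead, Matrix.vecTail]
  · rw [key (0) 0 (by intro y; norm_num [Γm, Matrix.vecHead, Matrix.vecTail])]
    norm_num [DΓ, Matrix.vecHead, Matrix.vecTail]
  · rw [key (0) 0 (by intro y; norm_num [Γm, Matrix.vecHead, Matrix.vecTail])]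
    norm_num [DΓ, Matrix.vecHead, Matrix.vecTail]
  · rw [key (0) 0 (by intro y; norm_num [Γm, Matrix.vecHead, Matrix.vecTail])]
    norm_num [DΓ, Matrix.vecHead, Matrix.vecTail]
  · rw [key (1) 0 (by intro y; norm_num [Γm, Matrix.vecHead, Matrix.vecTail])]
    norm_num [DΓ, Matrix.vecHead, Matrix.vecTail]
  · rw [key (0) 0 (by intro y; norm_num [Γm, Matrix.vecHead, Matrix.vecTail])]
    norm_num [DΓ, Matrix.vecHead, Matrix.vecTail]
  · rw [key (0) 0 (by intro y; norm_num [Γm, Matrix.vecHead, Matrix.vecTail])]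
    norm_num [DΓ, Matrix.vecHead, Matrix.vecTail]
  · rw [key (0) 0 (by intro y; norm_num [Γm, Matrix.vecHead, Matrix.vecTail])]
    norm_num [DΓ, Matrix.vecHead, Matrix.vecTail]
  · rw [key (0) 0 (by intro y; norm_num [Γm, Matrix.vecHead, Matrix.vecTail])]
    norm_num [DΓ, Matrix.vecHead, Matrix.vecTail]
  · rw [key (0) 0 (by intro y; norm_num [Γm, Matrix.vecHead, Matrix.vecTail])]
    norm_num [DΓ, Matrix.vecHead, Matrix.vecTail]
  · rw [key (0) 0 (by intro y; norm_num [Γm, Matrix.vecHead, Matrix.vecTail])]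
    norm_num [DΓ, Matrix.vecHead, Matrix.vecTail]
  · rw [key (0) 0 (by intro y; norm_num [Γm, Matrix.vecHead, Matrix.vecTail])]
    norm_num [DΓ, Matrix.vecHead, Matrix.vecTail]
  · rw [key (0) 0 (by intro y; norm_num [Γm, Matrix.vecHead, Matrix.vecTail])]
    norm_num [DΓ, Matrix.vecHead, Matrix.vecTail]
  · rw [key (0) 0 (by intro y; norm_num [Γm, Matrix.vecHead, Matrix.vecTail])]
    norm_num [DΓ, Matrix.vecHead, Matrix.vecTail]
  · rw [key (0) 0 (by intro y; norm_num [Γm, Matrix.vecHead, Matrix.vecTail])]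
    norm_num [DΓ, Matrix.vecHead, Matrix.vecTail]
  · rw [key (0) 0 (by intro y; norm_num [Γm, Matrix.vecHead, Matrix.vecTail])]
    norm_num [DΓ, Matrix.vecHead, Matrix.vecTail]
  · rw [key (0) 0 (by intro y; norm_num [Γm, Matrix.vecHead, Matrix.vecTail])]
    norm_num [DΓ, Matrix.vecHead, Matrix.vecTail]
  · rw [key (0) 0 (by intro y; norm_num [Γm, Matrix.vecHead, Matrix.vecTail])]
    norm_num [DΓ, Matrix.vecHead, Matrix.vecTail]
  · rw [key (1) 0 (by intro y; norm_num [Γm, Matrix.vecHead, Matrix.vecTail])]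
    norm_num [DΓ, Matrix.vecHead, Matrix.vecTail]
  · rw [key (0) 0 (by intro y; norm_num [Γm, Matrix.vecHead, Matrix.vecTail])]
    norm_num [DΓ, Matrix.vecHead, Matrix.vecTail]
  · rw [key (0) 0 (by intro y; norm_num [Γm, Matrix.vecHead, Matrix.vecTail])]
    norm_num [DΓ, Matrix.vecHead, Matrix.vecTail]
  · rw [key (1) 0 (by intro y; norm_num [Γm, Matrix.vecHead, Matrix.vecTail])]
    norm_num [DΓ, Matrix.vecHead, Matrix.vecTail]
  · rw [key (0) 0 (by intro y; norm_num [Γm, Matrix.vecHead, Matrix.vecTail])]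
    norm_num [DΓ, Matrix.vecHead, Matrix.vecTail]
  · rw [key (0) 0 (by intro y; norm_num [Γm, Matrix.vecHead, Matrix.vecTail])]
    norm_num [DΓ, Matrix.vecHead, Matrix.vecTail]
  · rw [key (0) 0 (by intro y; norm_num [Γm, Matrix.vecHead, Matrix.vecTail])]
    norm_num [DΓ, Matrix.vecHead, Matrix.vecTail]
  · rw [key (a/q) 2 (by
        intro y
        simp [Γm, Ex, Matrix.vecHead, Matrix.vecTail]
        try ring)]
    simp [DΓ, Ex, Matrix.vecHead, Matrix.vecTail]
    split_ifs
    · try ring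
    · rfl
  · rw [key (0) 0 (by intro y; norm_num [Γm, Matrix.vecHead, Matrix.vecTail])]
    norm_num [DΓ, Matrix.vecHead, Matrix.vecTail]
  · rw [key (0) 0 (by intro y; norm_num [Γm, Matrix.vecHead, Matrix.vecTail])]
    norm_num [DΓ, Matrix.vecHead, Matrix.vecTail]
  · rw [key (-(a/q)) 2 (by
        intro y
        simp [Γm, Ex, Matrix.vecHead, Matrix.vecTail]
        try ring)]
    simp [DΓ, Ex, Matrix.vecHead, Matrix.vecTail]
    split_ifs
    · try ring
    · rfl
  · rw [key (0) 0 (by intro y; norm_num [Γm, Matrix.vecHead, Matrix.vecTail])]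
    norm_num [DΓ, Matrix.vecHead, Matrix.vecTail]
  · rw [key (0) 0 (by intro y; norm_num [Γm, Matrix.vecHead, Matrix.vecTail])]
    norm_num [DΓ, Matrix.vecHead, Matrix.vecTail]
  · rw [key (a/q) 2 (by
        intro y
        simp [Γm, Ex, Matrix.vecHead, Matrix.vecTail]
        try ring)]
    simp [DΓ, Ex, Matrix.vecHead, Matrix.vecTail]
    split_ifs
    · try ring
    · rfl
  · rw [key (0) 0 (by intro y; norm_num [Γm, Matrix.vecHead, Matrix.vecTail])]
    norm_num [DΓ, Matrix.vecHead, Matrix.vecTail]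
  · rw [key (0) 0 (by intro y; norm_num [Γm, Matrix.vecHead, Matrix.vecTail])]
    norm_num [DΓ, Matrix.vecHead, Matrix.vecTail]
  · rw [key (-(c/q)) 0 (by intro y; norm_num [Γm, Matrix.vecHead, Matrix.vecTail])]
    norm_num [DΓ, Matrix.vecHead, Matrix.vecTail]
  · rw [key (0) 0 (by intro y; norm_num [Γm, Matrix.vecHead, Matrix.vecTail])]
    norm_num [DΓ, Matrix.vecHead, Matrix.vecTail]
  · rw [key (0) 0 (by intro y; norm_num [Γm, Matrix.vecHead, Matrix.vecTail])]
    norm_num [DΓ, Matrix.vecHead, Matrix.vecTail]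
  · rw [key (-(c/q)) 0 (by intro y; norm_num [Γm, Matrix.vecHead, Matrix.vecTail])]
    norm_num [DΓ, Matrix.vecHead, Matrix.vecTail]
  · rw [key (0) 0 (by intro y; norm_num [Γm, Matrix.vecHead, Matrix.vecTail])]
    norm_num [DΓ, Matrix.vecHead, Matrix.vecTail]

set_option maxHeartbeats 3000000 in
lemma ricci_val (ha : a ≠ 0) (hq : q ≠ 0) (x : Pt) (i j : Fin 4) :
    ricci (gA2 a b c q 1) x i j =
      (!![0, 0, 3*(a * Ex x)/q, 0;
          0, -(3*(a * Ex x)/q), 0, 0;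
          3*(a * Ex x)/q, 0, -(2*b/q), -(3*c/q);
          0, 0, -(3*c/q), -3] : Mtx) i j := by
  have hE := Ex_ne x
  fin_cases i <;> fin_cases j <;>
    simp only [ricci, Rup, Fin.sum_univ_four, chris_fun ha hq, pd_Γ ha hq]
  all_goals try simp [Γm, DΓ, Matrix.vecHead, Matrix.vecTail]
  all_goals try field_simp
  all_goals ring

set_option maxHeartbeats 1000000 in
lemma scal_val (ha : a ≠ 0) (hq : q ≠ 0) (x : Pt) :
    scal (gA2 a b c q 1) x = -(12/q) := by
  have hE := Ex_ne x
  simp [scal, Fin.sum_univ_four, ginv_val ha hq, ricci_val ha hq,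
    Matrix.vecHead, Matrix.vecTail]
  try field_simp
  try ring

end dchris

section eqs
variable {a b c q : ℝ} {φ : Pt → ℝ}

lemma hess_val (ha : a ≠ 0) (hq : q ≠ 0) (x : Pt) (i j : Fin 4) :
    hess (gA2 a b c q 1) φ x i j =
      pd i (pd j φ) x -
        (Γm a b c q x 0 i j * pd 0 φ x + Γm a b c q x 1 i j * pd 1 φ x
          + Γm a b c q x 2 i j * pd 2 φ x + Γm a b c q x 3 i j * pd 3 φ x) := by
  simp only [hess, chris_fun ha hq, Fin.sum_univ_four]

lemma lap_val (ha : a ≠ 0) (hq : q ≠ 0) (x : Pt) :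
    lap (gA2 a b c q 1) φ x =
      (c^2 - b*q)/(q*(a*Ex x)^2) * hess (gA2 a b c q 1) φ x 0 0
      - (1/(a*Ex x)) * hess (gA2 a b c q 1) φ x 0 2
      + c/(q*(a*Ex x)) * hess (gA2 a b c q 1) φ x 0 3
      + 1/(a*Ex x) * hess (gA2 a b c q 1) φ x 1 1
      - (1/(a*Ex x)) * hess (gA2 a b c q 1) φ x 2 0
      + c/(q*(a*Ex x)) * hess (gA2 a b c q 1) φ x 3 0
      + 1/q * hess (gA2 a b c q 1) φ x 3 3 := by
  simp only [lap, Fin.sum_univ_four, ginv_val ha hq]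
  simp [Matrix.vecHead, Matrix.vecTail]
  ring

set_option maxHeartbeats 4000000 in
lemma keyRel (ha : a ≠ 0) (hq : q ≠ 0) (hφ : ContDiff ℝ (⊤ : ℕ∞) φ)
    (hCE : ConfEinsteinEq (gA2 a b c q 1) φ) (x : Pt) :
    pd 0 (pd 0 φ) x = 0 ∧ pd 0 (pd 1 φ) x = 0 ∧ pd 1 (pd 2 φ) x = 0 ∧
    pd 0 (pd 3 φ) x = pd 0 φ x ∧ pd 1 (pd 3 φ) x = pd 1 φ x ∧
    pd 0 (pd 2 φ) x = -pd 1 (pd 1 φ) x ∧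
    c * pd 0 φ x + q * pd 1 (pd 1 φ) x + a * Ex x * pd 3 φ x
      - a * Ex x * pd 3 (pd 3 φ) x = 0 ∧
    a * Ex x * pd 2 (pd 3 φ) x = a * Ex x * pd 2 φ x + b * pd 0 φ x + c * pd 1 (pd 1 φ) x ∧
    b * (a * Ex x) * φ x - 2*b*c * pd 0 φ x - 2*b*q * pd 1 (pd 1 φ) x
      + 2*q*(a * Ex x) * pd 2 (pd 2 φ) x - 2*b*(a * Ex x) * pd 3 φ x = 0 := by
  have hE := Ex_ne x
  have h00 := hCE x 0 0
  have h01 := hCE x 0 1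
  have h02 := hCE x 0 2
  have h03 := hCE x 0 3
  have h11 := hCE x 1 1
  have h12 := hCE x 1 2
  have h13 := hCE x 1 3
  have h22 := hCE x 2 2
  have h23 := hCE x 2 3
  rw [lap_val ha hq, scal_val ha hq, gval] at h00 h01 h02 h03 h11 h12 h13 h22 h23
  simp only [hess_val ha hq, ricci_val ha hq] at h00 h01 h02 h03 h11 h12 h13 h22 h23
  simp [Γm, Matrix.vecHead, Matrix.vecTail] at h00 h01 h02 h03 h11 h12 h13 h22 h23
  simp only [pd_comm hφ 2 0 x, pd_comm hφ 3 0 x] at h00 h01 h02 h03 h11 h12 h13 h22 h23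
  refine ⟨?_, ?_, ?_, ?_, ?_, ?_, ?_, ?_, ?_⟩
  · linear_combination h00
  · linear_combination h01
  · linear_combination h12
  · linear_combination h03
  · linear_combination h13
  · linear_combination (norm := (field_simp; ring1)) (1/2 : ℝ) * h02 + (1/2 : ℝ) * h11
  · linear_combination (norm := (field_simp; ring1))
      ((c^2 - b*q)/(a * Ex x)) * h00 + (-q : ℝ) * h02 + (2*c) * h03 + q * h11
  · linear_combination (norm := (field_simp; ring1))
      (-c/2 : ℝ) * h11 + ((a * Ex x)/2) * h23
  · linear_combination (norm := (field_simp; ring1))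
      (-(b*q) : ℝ) * h11 + (q*(a * Ex x)) * h22

end eqs

section derive
variable {a b c q : ℝ} {φ : Pt → ℝ}

lemma pd_congr {F G : Pt → ℝ} (h : ∀ y, F y = G y) (i : Fin 4) (x : Pt) :
    pd i F x = pd i G x := by rw [funext h]

lemma pd_zero_fun {F : Pt → ℝ} (h : ∀ y, F y = 0) (i : Fin 4) (x : Pt) : pd i F x = 0 := by
  rw [pd_congr h i x]; exact pd_const i 0 x

lemma AE_contDiff : ContDiff ℝ (⊤ : ℕ∞) (fun y : Pt => a * Ex y) := by
  have hproj : ContDiff ℝ (⊤ : ℕ∞) (fun y : Pt => y 3) :=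
    (ContinuousLinearMap.proj (R := ℝ) (φ := fun _ : Fin 4 => ℝ) 3).contDiff
  exact contDiff_const.mul (Real.contDiff_exp.comp (contDiff_const.mul hproj))

lemma AE_pd (m : Fin 4) (x : Pt) :
    pd m (fun y : Pt => a * Ex y) x = if m = 3 then 2*(a * Ex x) else 0 := by
  rw [show (fun y : Pt => a * Ex y) = (fun y : Pt => a * Real.exp (2 * y 3)) from rfl,
    pd_cexp]
  unfold Ex
  split_ifs <;> ring

lemma pd_master {F1 F2 F3 F4 F5 : Pt → ℝ} (m : Fin 4) (x : Pt) (α β γ δ ε : ℝ)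
    (h1 : ContDiff ℝ (⊤ : ℕ∞) F1) (h2 : ContDiff ℝ (⊤ : ℕ∞) F2) (h3 : ContDiff ℝ (⊤ : ℕ∞) F3)
    (h4 : ContDiff ℝ (⊤ : ℕ∞) F4) (h5 : ContDiff ℝ (⊤ : ℕ∞) F5) :
    pd m (fun y => α*F1 y + β*F2 y + γ*F3 y + a * Ex y * (δ*F4 y) + a * Ex y * (ε*F5 y)) x
      = α * pd m F1 x + β * pd m F2 x + γ * pd m F3 x
        + a * Ex x * (δ * pd m F4 x) + a * Ex x * (ε * pd m F5 x)
        + (if m = 3 then 2*(a * Ex x) else 0) * (δ * F4 x)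
        + (if m = 3 then 2*(a * Ex x) else 0) * (ε * F5 x) := by
  have dAE : DifferentiableAt ℝ (fun y : Pt => a * Ex y) x := diffable AE_contDiff
  have d1 : DifferentiableAt ℝ F1 x := diffable h1
  have d2 : DifferentiableAt ℝ F2 x := diffable h2
  have d3 : DifferentiableAt ℝ F3 x := diffable h3
  have d4 : DifferentiableAt ℝ F4 x := diffable h4
  have d5 : DifferentiableAt ℝ F5 x := diffable h5
  rw [pd_add (by exact ((((d1.const_mul α).add (d2.const_mul β)).add (d3.const_mul γ)).add
        (dAE.mul (d4.const_mul δ)))) (by exact dAE.mul (d5.const_mul ε)),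
    pd_add (by exact (((d1.const_mul α).add (d2.const_mul β)).add (d3.const_mul γ)))
      (by exact dAE.mul (d4.const_mul δ)),
    pd_add (by exact ((d1.const_mul α).add (d2.const_mul β))) (by exact d3.const_mul γ),
    pd_add (by exact d1.const_mul α) (by exact d2.const_mul β),
    pd_cmul d1, pd_cmul d2, pd_cmul d3,
    pd_mul dAE (d4.const_mul δ), pd_mul dAE (d5.const_mul ε),
    pd_cmul d4, pd_cmul d5, AE_pd]
  ring

lemma final (ha : a ≠ 0) (hq : q ≠ 0) (hb : b ≠ 0) (hφ : ContDiff ℝ (⊤ : ℕ∞) φ)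
    (hCE : ConfEinsteinEq (gA2 a b c q 1) φ) :
    ∀ x : Pt, pd 0 φ x = 0 ∧ pd 1 φ x = 0 ∧ pd 3 φ x = φ x ∧
      2*q * pd 2 (pd 2 φ) x = b * φ x := by
  have K := fun x => keyRel (φ := φ) ha hq hφ hCE x
  have k1 : ∀ x, pd 0 (pd 0 φ) x = 0 := fun x => (K x).1
  have k2 : ∀ x, pd 0 (pd 1 φ) x = 0 := fun x => (K x).2.1
  have k3 : ∀ x, pd 1 (pd 2 φ) x = 0 := fun x => (K x).2.2.1
  have k4 : ∀ x, pd 0 (pd 3 φ) x = pd 0 φ x := fun x => (K x).2.2.2.1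
  have k5 : ∀ x, pd 1 (pd 3 φ) x = pd 1 φ x := fun x => (K x).2.2.2.2.1
  have k6 : ∀ x, pd 0 (pd 2 φ) x = -pd 1 (pd 1 φ) x := fun x => (K x).2.2.2.2.2.1
  have k7 : ∀ x, c * pd 0 φ x + q * pd 1 (pd 1 φ) x + a * Ex x * pd 3 φ x
      - a * Ex x * pd 3 (pd 3 φ) x = 0 := fun x => (K x).2.2.2.2.2.2.1
  have k8 : ∀ x, a * Ex x * pd 2 (pd 3 φ) x
      = a * Ex x * pd 2 φ x + b * pd 0 φ x + c * pd 1 (pd 1 φ) x :=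
    fun x => (K x).2.2.2.2.2.2.2.1
  have k9 : ∀ x, b * (a * Ex x) * φ x - 2*b*c * pd 0 φ x - 2*b*q * pd 1 (pd 1 φ) x
      + 2*q*(a * Ex x) * pd 2 (pd 2 φ) x - 2*b*(a * Ex x) * pd 3 φ x = 0 :=
    fun x => (K x).2.2.2.2.2.2.2.2
  have c0 := contDiff_pd hφ 0
  have c1 := contDiff_pd hφ 1
  have c2 := contDiff_pd hφ 2
  have c3 := contDiff_pd hφ 3
  have c11 := contDiff_pd c1 1
  have c33 := contDiff_pd c3 3
  have c23 := contDiff_pd c3 2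
  have c22 := contDiff_pd c2 2
  have hAne : ∀ x : Pt, a * Ex x ≠ 0 := fun x => mul_ne_zero ha (Ex_ne x)
  -- reshaped k7 and derivative in direction 2
  have k7s : ∀ y, c * pd 0 φ y + q * pd 1 (pd 1 φ) y + 0 * φ y
      + a * Ex y * (1 * pd 3 φ y) + a * Ex y * (-1 * pd 3 (pd 3 φ) y) = 0 :=
    fun y => by linear_combination k7 y
  have Sa : ∀ x, -(c * pd 1 (pd 1 φ) x) + a * Ex x * pd 2 (pd 3 φ) x
      - a * Ex x * pd 2 (pd 3 (pd 3 φ)) x = 0 := by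
    intro x
    have h0 := pd_zero_fun k7s 2 x
    rw [pd_master 2 x c q 0 1 (-1) c0 c11 hφ c3 c33] at h0
    have f1 : pd 2 (pd 0 φ) x = -pd 1 (pd 1 φ) x := by rw [pd_comm hφ 2 0]; exact k6 x
    have f2 : pd 2 (pd 1 (pd 1 φ)) x = 0 := by
      rw [pd_comm c1 2 1]
      have e : ∀ y, pd 2 (pd 1 φ) y = 0 := fun y => by rw [pd_comm hφ 2 1]; exact k3 y
      exact pd_zero_fun e 1 x
    simp only [show (2 : Fin 4) ≠ 3 from by decide, if_neg, if_false] at h0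
    rw [f1, f2] at h0
    linear_combination h0
  -- reshaped k8 and derivative in direction 3
  have k8s : ∀ y, (-b) * pd 0 φ y + (-c) * pd 1 (pd 1 φ) y + 0 * φ y
      + a * Ex y * (1 * pd 2 (pd 3 φ) y) + a * Ex y * (-1 * pd 2 φ y) = 0 :=
    fun y => by linear_combination k8 y
  have Sb : ∀ x, (-b) * pd 0 φ x + (-c) * pd 1 (pd 1 φ) x
      + a * Ex x * pd 2 (pd 3 (pd 3 φ)) x + 2*(a * Ex x) * pd 2 (pd 3 φ) x
      - a * Ex x * pd 3 (pd 2 φ) x - 2*(a * Ex x) * pd 2 φ x = 0 := by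
    intro x
    have h0 := pd_zero_fun k8s 3 x
    rw [pd_master 3 x (-b) (-c) 0 1 (-1) c0 c11 hφ c23 c2] at h0
    have f3 : pd 3 (pd 0 φ) x = pd 0 φ x := by rw [pd_comm hφ 3 0]; exact k4 x
    have f4 : pd 3 (pd 1 (pd 1 φ)) x = pd 1 (pd 1 φ) x := by
      rw [pd_comm c1 3 1]
      have e : ∀ y, pd 3 (pd 1 φ) y = pd 1 φ y := fun y => by
        rw [pd_comm hφ 3 1]; exact k5 y
      rw [pd_congr e 1 x]
    have f5 : pd 3 (pd 2 (pd 3 φ)) x = pd 2 (pd 3 (pd 3 φ)) x := by rw [pd_comm c3 3 2]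
    norm_num at h0
    rw [f3, f4, f5] at h0
    linarith [h0]
  -- conclude ∂₀φ = 0
  have hP0 : ∀ x, pd 0 φ x = 0 := by
    intro x
    have f6 : pd 3 (pd 2 φ) x = pd 2 (pd 3 φ) x := pd_comm hφ 3 2 x
    have hb0 : b * pd 0 φ x = 0 := by
      have := Sa x; have h2 := Sb x; have h3 := k8 x
      rw [f6] at h2
      linear_combination this + h2 - 2 * h3
    exact (mul_eq_zero.mp hb0).resolve_left hb
  -- ∂₁∂₁φ = 0
  have h11 : ∀ x, pd 1 (pd 1 φ) x = 0 := by
    intro x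
    have h2 : pd 0 (pd 2 φ) x = 0 := by rw [pd_comm hφ 0 2]; exact pd_zero_fun hP0 2 x
    have := k6 x; linarith
  -- ∂₃∂₃φ = ∂₃φ
  have h33 : ∀ x, pd 3 (pd 3 φ) x = pd 3 φ x := by
    intro x
    have h0 : (a * Ex x) * (pd 3 φ x - pd 3 (pd 3 φ) x) = 0 := by
      linear_combination k7 x - c * hP0 x - q * h11 x
    have := (mul_eq_zero.mp h0).resolve_left (hAne x)
    linarith
  -- ∂₂∂₃φ = ∂₂φ
  have h23 : ∀ x, pd 2 (pd 3 φ) x = pd 2 φ x := by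
    intro x
    have h0 : (a * Ex x) * (pd 2 (pd 3 φ) x - pd 2 φ x) = 0 := by
      linear_combination k8 x + b * hP0 x + c * h11 x
    have := (mul_eq_zero.mp h0).resolve_left (hAne x)
    linarith
  -- reduced (2,2) equation
  have K9 : ∀ x, b * φ x + 2*q * pd 2 (pd 2 φ) x - 2*b * pd 3 φ x = 0 := by
    intro x
    have h0 : (a * Ex x) * (b * φ x + 2*q * pd 2 (pd 2 φ) x - 2*b * pd 3 φ x) = 0 := by
      linear_combination k9 x + 2*b*c * hP0 x + 2*b*q * h11 x
    exact (mul_eq_zero.mp h0).resolve_left (hAne x)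
  have K9s : ∀ y, b * φ y + 2*q * pd 2 (pd 2 φ) y + (-(2*b)) * pd 3 φ y
      + a * Ex y * (0 * φ y) + a * Ex y * (0 * φ y) = 0 :=
    fun y => by linear_combination K9 y
  -- ∂₁φ = 0
  have hP1 : ∀ x, pd 1 φ x = 0 := by
    intro x
    have h0 := pd_zero_fun K9s 1 x
    rw [pd_master 1 x b (2*q) (-(2*b)) 0 0 hφ c22 c3 hφ hφ] at h0
    have f7 : pd 1 (pd 2 (pd 2 φ)) x = 0 := by
      rw [pd_comm c2 1 2]
      exact pd_zero_fun k3 2 x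
    have f8 : pd 1 (pd 3 φ) x = pd 1 φ x := k5 x
    simp only [show (1 : Fin 4) ≠ 3 from by decide, if_neg, if_false] at h0
    rw [f7, f8] at h0
    have hb1 : b * pd 1 φ x = 0 := by linear_combination -h0
    exact (mul_eq_zero.mp hb1).resolve_left hb
  -- ∂₃ of reduced equation
  have hS4 : ∀ x, 2*q * pd 2 (pd 2 φ) x = b * pd 3 φ x := by
    intro x
    have h0 := pd_zero_fun K9s 3 x
    rw [pd_master 3 x b (2*q) (-(2*b)) 0 0 hφ c22 c3 hφ hφ] at h0
    have f9 : pd 3 (pd 2 (pd 2 φ)) x = pd 2 (pd 2 φ) x := by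
      rw [pd_comm c2 3 2]
      have e : ∀ y, pd 3 (pd 2 φ) y = pd 2 φ y := fun y => by
        rw [pd_comm hφ 3 2]; exact h23 y
      rw [pd_congr e 2 x]
    norm_num at h0
    rw [f9, h33 x] at h0
    linarith [h0]
  -- ∂₃φ = φ
  have hP3 : ∀ x, pd 3 φ x = φ x := by
    intro x
    have h0 := K9 x
    have h1 := hS4 x
    have hb3 : b * (pd 3 φ x - φ x) = 0 := by linear_combination h1 - h0
    have := (mul_eq_zero.mp hb3).resolve_left hb
    linarith
  intro x
  exact ⟨hP0 x, hP1 x, hP3 x, by rw [hS4 x, hP3 x]⟩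

end derive

section assemble
variable {a b c q : ℝ} {φ : Pt → ℝ}

lemma line_deriv (hφ : ContDiff ℝ (⊤ : ℕ∞) φ) (p v : Pt) (t : ℝ) :
    HasDerivAt (fun s : ℝ => φ (p + s • v)) (fderiv ℝ φ (p + t • v) v) t := by
  have h1 : HasDerivAt (fun s : ℝ => p + s • v) v t := by
    simpa using ((hasDerivAt_id t).smul_const v).const_add p
  exact ((hφ.differentiable (by simp) (p + t • v)).hasFDerivAt).comp_hasDerivAt t h1

lemma const_dir (hφ : ContDiff ℝ (⊤ : ℕ∞) φ) (i : Fin 4) (hz : ∀ y, pd i φ y = 0)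
    (x : Pt) (t : ℝ) : φ (x + t • (Pi.single i 1 : Pt)) = φ x := by
  have hd : ∀ s : ℝ, HasDerivAt (fun u : ℝ => φ (x + u • (Pi.single i 1 : Pt))) 0 s := by
    intro s
    have h1 := line_deriv hφ x ((Pi.single i 1 : Pt)) s
    rwa [show fderiv ℝ φ (x + s • (Pi.single i 1 : Pt)) ((Pi.single i 1 : Pt)) = 0 from hz _] at h1
  have hconst := is_const_of_deriv_eq_zero
    (f := fun u : ℝ => φ (x + u • (Pi.single i 1 : Pt)))
    (fun s => (hd s).differentiableAt) (fun s => (hd s).deriv) t 0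
  simpa using hconst

lemma exp_dir (hφ : ContDiff ℝ (⊤ : ℕ∞) φ) (hz : ∀ y, pd 3 φ y = φ y)
    (x : Pt) (t : ℝ) : φ (x + t • (Pi.single 3 1 : Pt)) = φ x * Real.exp t := by
  have hd : ∀ s : ℝ,
      HasDerivAt (fun u : ℝ => φ (x + u • (Pi.single 3 1 : Pt)) * Real.exp (-u)) 0 s := by
    intro s
    have h1 := line_deriv hφ x ((Pi.single 3 1 : Pt)) s
    have h2 : HasDerivAt (fun u : ℝ => Real.exp (-u)) (-Real.exp (-s)) s := by
      exact ((Real.hasDerivAt_exp (-s)).comp s (hasDerivAt_neg s)).congr_deriv (by ring)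
    have h3 := h1.mul h2
    rw [show fderiv ℝ φ (x + s • (Pi.single 3 1 : Pt)) ((Pi.single 3 1 : Pt))
      = φ (x + s • (Pi.single 3 1 : Pt)) from hz _] at h3
    exact h3.congr_deriv (by ring)
  have hconst := is_const_of_deriv_eq_zero
    (f := fun u : ℝ => φ (x + u • (Pi.single 3 1 : Pt)) * Real.exp (-u))
    (fun s => (hd s).differentiableAt) (fun s => (hd s).deriv) t 0
  simp only [zero_smul, add_zero, neg_zero, Real.exp_zero, mul_one] at hconst
  calc φ (x + t • (Pi.single 3 1 : Pt))
      = φ (x + t • (Pi.single 3 1 : Pt)) * Real.exp (-t) * Real.exp t := by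
        rw [mul_assoc, ← Real.exp_add]; simp
    _ = φ x * Real.exp t := by rw [hconst]

end assemble

/-- every positive solution of the conformally Einstein equation
for the Type (A.2) metric with α = 1, b ≠ 0 has the form φ = ϕ(x₃)e^{x₄}
with 2qϕ'' = bϕ. -/
theorem typeA2_alpha1_confEinstein_solutions (a b c q : ℝ) (h : a * q ≠ 0) (hb : b ≠ 0) :
    ∀ φ : Pt → ℝ, ContDiff ℝ (⊤ : ℕ∞) φ → (∀ x : Pt, 0 < φ x) →
      ConfEinsteinEq (gA2 a b c q 1) φ →
      ∃ ϕ : ℝ → ℝ, (∀ x : Pt, φ x = ϕ (x 2) * Real.exp (x 3)) ∧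
        ∀ t : ℝ, 2*q * deriv (deriv ϕ) t = b * ϕ t := by
  intro φ hφ _hpos hCE
  have ha : a ≠ 0 := fun h' => h (by rw [h', zero_mul])
  have hq : q ≠ 0 := fun h' => h (by rw [h', mul_zero])
  have H := final ha hq hb hφ hCE
  have hP0 : ∀ y, pd 0 φ y = 0 := fun y => (H y).1
  have hP1 : ∀ y, pd 1 φ y = 0 := fun y => (H y).2.1
  have hP3 : ∀ y, pd 3 φ y = φ y := fun y => (H y).2.2.1
  have hODE : ∀ y, 2*q * pd 2 (pd 2 φ) y = b * φ y := fun y => (H y).2.2.2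
  refine ⟨fun t => φ ((0 : Pt) + t • (Pi.single 2 1 : Pt)), ?_, ?_⟩
  · intro x
    have hx : x = (((0 : Pt) + (x 2) • (Pi.single 2 1 : Pt)) + (x 3) • (Pi.single 3 1 : Pt)
        + (x 0) • (Pi.single 0 1 : Pt)) + (x 1) • (Pi.single 1 1 : Pt) := by
      funext i
      fin_cases i <;> simp [Pi.single_apply]
    calc φ x = φ ((((0 : Pt) + (x 2) • (Pi.single 2 1 : Pt)) + (x 3) • (Pi.single 3 1 : Pt)
          + (x 0) • (Pi.single 0 1 : Pt)) + (x 1) • (Pi.single 1 1 : Pt)) := by rw [← hx]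
      _ = φ (((0 : Pt) + (x 2) • (Pi.single 2 1 : Pt)) + (x 3) • (Pi.single 3 1 : Pt)
          + (x 0) • (Pi.single 0 1 : Pt)) := const_dir hφ 1 hP1 _ _
      _ = φ (((0 : Pt) + (x 2) • (Pi.single 2 1 : Pt)) + (x 3) • (Pi.single 3 1 : Pt)) :=
          const_dir hφ 0 hP0 _ _
      _ = φ ((0 : Pt) + (x 2) • (Pi.single 2 1 : Pt)) * Real.exp (x 3) := exp_dir hφ hP3 _ _
  · intro t
    have hB1 : ∀ s : ℝ, HasDerivAt (fun u : ℝ => φ ((0 : Pt) + u • (Pi.single 2 1 : Pt)))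
        (pd 2 φ ((0 : Pt) + s • (Pi.single 2 1 : Pt))) s := fun s => line_deriv hφ _ _ s
    have hB2 : ∀ s : ℝ, HasDerivAt (fun u : ℝ => pd 2 φ ((0 : Pt) + u • (Pi.single 2 1 : Pt)))
        (pd 2 (pd 2 φ) ((0 : Pt) + s • (Pi.single 2 1 : Pt))) s :=
      fun s => line_deriv (contDiff_pd hφ 2) _ _ s
    have e1 : deriv (fun u : ℝ => φ ((0 : Pt) + u • (Pi.single 2 1 : Pt)))
        = fun s => pd 2 φ ((0 : Pt) + s • (Pi.single 2 1 : Pt)) := funext fun s => (hB1 s).deriv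
    rw [e1]
    rw [(hB2 t).deriv]
    exact hODE _
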